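/- Let R₁,...,R_m : H → ℝ be convex differentiable functions on a real inner product space H, and suppose f⋆ minimizes f ↦ max_i R_i(f) over H. Then there exist λ₁,...,λ_m ≥ 0 with ∑_i λ_i = 1 such that the gradient of ∑_i λ_i R_i vanishes at f⋆, i.e., f⋆ is a first-order stationary point (in fact a global minimizer) of the convex combination ∑_i λ_i R_i. -/

import Mathlib

open Finset
open scoped RealInnerProductSpace

private lemma convexOn_finset_sum' {H : Type*} [NormedAddCommGroup H] [InnerProductSpace ℝ H]
    {ι : Type*} (s : Finset ι) (f : ι → H → ℝ) (h : ∀ i ∈ s, ConvexOn ℝ Set.univ (f i)) :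
    ConvexOn ℝ Set.univ (fun x => ∑ i ∈ s, f i x) := by
  induction s using Finset.cons_induction with
  | empty => simpa using convexOn_const (0:ℝ) convex_univ
  | cons i s hi ih =>
    simp only [Finset.sum_cons]
    exact (h i (Finset.mem_cons_self i s)).add (ih fun j hj => h j (Finset.mem_cons_of_mem hj))

/-- Minimizers of the max of finitely many convex differentiable risks are stationary
points (in fact global minimizers) of some convex combination of the risks. -/
theorem max_risk_minimizer_stationary_for_convex_combination
    {H : Type*} [NormedAddCommGroup H] [InnerProductSpace ℝ H] [FiniteDimensional ℝ H]
    (m : ℕ) (hm : 0 < m) (R : Fin m → H → ℝ)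
    (hconv : ∀ i, ConvexOn ℝ Set.univ (R i))
    (hdiff : ∀ i, Differentiable ℝ (R i))
    (fstar : H) (hmin : ∀ g : H, (⨆ i, R i fstar) ≤ ⨆ i, R i g) :
    ∃ lam : Fin m → ℝ, (∀ i, 0 ≤ lam i) ∧ (∑ i, lam i) = 1 ∧
      fderiv ℝ (fun f => ∑ i, lam i * R i f) fstar = 0 ∧
      ∀ g : H, (∑ i, lam i * R i fstar) ≤ ∑ i, lam i * R i g := by
  classical
  have hne : Nonempty (Fin m) := ⟨⟨0, hm⟩⟩
  set M : ℝ := ⨆ i, R i fstar with hM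
  have hle : ∀ i, R i fstar ≤ M := fun i => le_ciSup (f := fun i => R i fstar) (Set.finite_range _).bddAbove i
  obtain ⟨i0, hi0⟩ := Finite.exists_max (fun i => R i fstar)
  have hi0M : R i0 fstar = M := le_antisymm (hle i0) (ciSup_le hi0)
  set T : Finset (Fin m) := Finset.univ.filter (fun i => R i fstar = M) with hT
  have hi0T : i0 ∈ T := by simp [hT, hi0M]
  set gr : Fin m → H := fun i => gradient (R i) fstar with hgr
  have hgrad_fderiv : ∀ i, fderiv ℝ (R i) fstar = InnerProductSpace.toDual ℝ H (gr i) := by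
    intro i
    simp [hgr, gradient]
  -- the set of convex combinations of active gradients
  set φ : ({i // i ∈ T} → ℝ) → H := fun w => ∑ j, w j • gr j with hφ
  set K : Set H := φ '' stdSimplex ℝ {i // i ∈ T} with hK
  have hL : IsLinearMap ℝ φ := by
    constructor
    · intro a b; simp [hφ, add_smul, Finset.sum_add_distrib]
    · intro c a; simp [hφ, smul_smul, Finset.smul_sum]
  -- Key claim : 0 ∈ K
  have hzero : (0 : H) ∈ K := by
    by_contra hx
    have hconvK : Convex ℝ K := (convex_stdSimplex ℝ _).is_linear_image hL
    have hcompK : IsCompact K :=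
      (isCompact_stdSimplex ℝ _).image (IsLinearMap.mk' _ hL).continuous_of_finiteDimensional
    obtain ⟨f, u, hfx, hfb⟩ := geometric_hahn_banach_point_closed hconvK hcompK.isClosed hx
    have hu : 0 < u := by simpa using hfx
    have hfgr : ∀ j ∈ T, u < f (gr j) := by
      intro j hj
      have : gr j ∈ K := by
        refine ⟨Pi.single ⟨j, hj⟩ 1, single_mem_stdSimplex ℝ _, ?_⟩
        simp [hφ, Pi.single_apply]
      exact hfb _ this
    -- direction of decrease
    set v : H := (InnerProductSpace.toDual ℝ H).symm f with hv
    have hfv : ∀ x : H, f x = ⟪v, x⟫ := by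
      intro x
      have := (InnerProductSpace.toDual ℝ H).apply_symm_apply f
      rw [← this]
      simp [hv]
    set d : H := -v with hd
    -- for every i, eventually along 𝓝[>] 0 the value drops below M
    have hev : ∀ i : Fin m, ∀ᶠ t in nhdsWithin (0:ℝ) (Set.Ioi 0),
        R i (fstar + t • d) < M := by
      intro i
      by_cases hiT : i ∈ T
      · -- active: negative directional derivative
        have hc : HasDerivAt (fun t : ℝ => fstar + t • d) d 0 := by
          simpa using ((hasDerivAt_id (0:ℝ)).smul_const d).const_add fstar
        have hφ' : HasDerivAt (fun t : ℝ => R i (fstar + t • d))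
            (fderiv ℝ (R i) fstar d) 0 := by
          have := ((hdiff i (fstar + (0:ℝ) • d)).hasFDerivAt.comp_hasDerivAt 0 hc)
          simp at this; exact this
        have hneg : fderiv ℝ (R i) fstar d < 0 := by
          rw [hgrad_fderiv i]
          have : ⟪gr i, d⟫ = -⟪v, gr i⟫ := by
            rw [hd, inner_neg_right, real_inner_comm]
          rw [InnerProductSpace.toDual_apply_apply, this]
          have := (hfv (gr i)) ▸ hfgr i hiT
          linarith
        have hslope := hasDerivAt_iff_tendsto_slope.1 hφ'
        have hslope' : Filter.Tendsto (slope (fun t : ℝ => R i (fstar + t • d)) 0)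
            (nhdsWithin (0:ℝ) (Set.Ioi 0)) (nhds (fderiv ℝ (R i) fstar d)) :=
          hslope.mono_left (nhdsWithin_mono _ (fun t ht => ne_of_gt ht))
        have h1 : ∀ᶠ t in nhdsWithin (0:ℝ) (Set.Ioi 0),
            slope (fun t : ℝ => R i (fstar + t • d)) 0 t < 0 :=
          hslope'.eventually_lt_const hneg
        have h2 : ∀ᶠ t in nhdsWithin (0:ℝ) (Set.Ioi 0), (0:ℝ) < t :=
          self_mem_nhdsWithin
        filter_upwards [h1, h2] with t hst htpos
        have hiM : R i fstar = M := by simpa [hT] using hiT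
        rw [slope_def_field] at hst
        have : (R i (fstar + t • d) - R i (fstar + (0:ℝ) • d)) / (t - 0) < 0 := by
          simpa [div_eq_inv_mul] using hst
        rw [div_neg_iff] at this
        rcases this with ⟨h', h''⟩ | ⟨h', h''⟩
        · linarith
        · have : R i (fstar + t • d) < R i (fstar + (0:ℝ) • d) := by linarith
          simpa [hiM] using this
      · -- inactive: continuity
        have hlt : R i fstar < M := lt_of_le_of_ne (hle i) (by simpa [hT] using hiT)
        have hcont : Filter.Tendsto (fun t : ℝ => R i (fstar + t • d))
            (nhdsWithin (0:ℝ) (Set.Ioi 0)) (nhds (R i fstar)) := by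
          have : Continuous (fun t : ℝ => R i (fstar + t • d)) :=
            (hdiff i).continuous.comp (continuous_const.add (continuous_id.smul continuous_const))
          have := this.tendsto (0:ℝ)
          simpa using this.mono_left nhdsWithin_le_nhds
        exact hcont.eventually_lt_const hlt
    have hall : ∀ᶠ t in nhdsWithin (0:ℝ) (Set.Ioi 0),
        ∀ i, R i (fstar + t • d) < M := Filter.eventually_all.2 hev
    obtain ⟨t, ht⟩ := hall.exists
    obtain ⟨i1, hi1⟩ := Finite.exists_max (fun i => R i (fstar + t • d))
    have : (⨆ i, R i (fstar + t • d)) < M := lt_of_le_of_lt (ciSup_le hi1) (ht i1)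
    exact absurd (hmin (fstar + t • d)) (not_le.2 this)
  -- extract the weights
  obtain ⟨w, hwmem, hwsum⟩ := hzero
  set lam : Fin m → ℝ := fun i => if h : i ∈ T then w ⟨i, h⟩ else 0 with hlam
  have hlam_nonneg : ∀ i, 0 ≤ lam i := by
    intro i
    by_cases h : i ∈ T
    · simp only [hlam, dif_pos h]; exact hwmem.1 _
    · simp [hlam, h]
  have hsum_eq : ∀ (F : Fin m → ℝ), (∑ i, lam i * F i)
      = ∑ j : {i // i ∈ T}, w j * F j := by
    intro F
    have h0 : ∑ i, lam i * F i = ∑ i ∈ T, lam i * F i := by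
      refine (Finset.sum_subset T.subset_univ ?_).symm
      intro x _ hx
      simp [hlam, hx]
    rw [h0, ← Finset.sum_attach T (fun i => lam i * F i)]
    refine Finset.sum_congr rfl fun j _ => ?_
    simp [hlam]
  have hgrsum : ∑ i, lam i • gr i = 0 := by
    have h0 : ∑ i, lam i • gr i = ∑ i ∈ T, lam i • gr i := by
      refine (Finset.sum_subset T.subset_univ ?_).symm
      intro x _ hx; simp [hlam, hx]
    rw [h0, ← Finset.sum_attach T (fun i => lam i • gr i)]
    have h1 : ∑ x ∈ T.attach, lam ↑x • gr ↑x = φ w := by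
      refine Finset.sum_congr rfl fun j _ => ?_
      simp [hlam]
    rw [h1, hwsum]
  have hsum1 : (∑ i, lam i) = 1 := by
    have h7 := hsum_eq (fun _ => 1)
    simp only [mul_one] at h7
    rw [h7]; exact hwmem.2
  have hFd : HasFDerivAt (fun f => ∑ i, lam i * R i f)
      (∑ i, lam i • fderiv ℝ (R i) fstar) fstar :=
    HasFDerivAt.fun_sum fun i _ => ((hdiff i fstar).hasFDerivAt.const_mul (lam i))
  have hfz : (∑ i, lam i • fderiv ℝ (R i) fstar) = 0 := by
    have h2 : (∑ i, lam i • fderiv ℝ (R i) fstar)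
        = InnerProductSpace.toDual ℝ H (∑ i, lam i • gr i) := by
      rw [map_sum]
      refine Finset.sum_congr rfl fun i _ => ?_
      rw [hgrad_fderiv i, map_smul]
    rw [h2, hgrsum, map_zero]
  have hfderiv0 : fderiv ℝ (fun f => ∑ i, lam i * R i f) fstar = 0 := by
    rw [hFd.fderiv, hfz]
  refine ⟨lam, hlam_nonneg, hsum1, hfderiv0, ?_⟩
  intro g
  set F : H → ℝ := fun f => ∑ i, lam i * R i f with hF
  have hFconv : ConvexOn ℝ Set.univ F := by
    refine convexOn_finset_sum' _ _ (fun i _ => ?_)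
    simpa [smul_eq_mul] using (hconv i).smul (hlam_nonneg i)
  have hF0 : HasFDerivAt F (0 : H →L[ℝ] ℝ) fstar := hfz ▸ hFd
  have hF0' : HasFDerivAt F (0 : H →L[ℝ] ℝ) (fstar + (0:ℝ) • (g - fstar)) := by
    simpa using hF0
  have hc : HasDerivAt (fun t : ℝ => fstar + t • (g - fstar)) (g - fstar) 0 := by
    simpa using ((hasDerivAt_id (0:ℝ)).smul_const (g - fstar)).const_add fstar
  have hφ0 : HasDerivAt (fun t : ℝ => F (fstar + t • (g - fstar))) 0 0 := by
    have h := hF0'.comp_hasDerivAt 0 hc; simp at h; exact h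
  have hφconv : ConvexOn ℝ Set.univ (fun t : ℝ => F (fstar + t • (g - fstar))) := by
    have h3 := hFconv.comp_affineMap (AffineMap.lineMap fstar g)
    have h4 : (F ∘ (AffineMap.lineMap fstar g : ℝ →ᵃ[ℝ] H))
        = fun t : ℝ => F (fstar + t • (g - fstar)) := by
      funext t
      rw [Function.comp_apply, AffineMap.lineMap_apply_module]
      exact congrArg F (by module)
    rw [h4] at h3
    simpa using h3
  have hkey := hφconv.le_slope_of_hasDerivAt (Set.mem_univ (0:ℝ)) (Set.mem_univ 1)
    one_pos hφ0
  rw [slope_def_field] at hkey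
  have h5 : F (fstar + (1:ℝ) • (g - fstar)) = F g := by
    simp
  have h6 : F (fstar + (0:ℝ) • (g - fstar)) = F fstar := by
    simp
  rw [h5, h6] at hkey
  have : (0:ℝ) ≤ F g - F fstar := by
    have := hkey
    simpa using this
  simpa [hF] using sub_nonneg.mp this
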